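/- Let $A, B$ be positive definite real symmetric matrices with $\delta_\infty(A,B) := \|\log(A^{-1/2} B A^{-1/2})\|$. If $A \preceq U$ for a positive definite matrix $U$ and $\delta_\infty(A,B) \le c$ for some $c > 0$, then $\|A - B\| \le \lambda_{\max}(U)\,\frac{e^c - 1}{c}\,\delta_\infty(A,B)$. -/

import Mathlib

open scoped Matrix.Norms.L2Operator Classical
open Matrix

noncomputable section

/-- Loewner order: `A ⪯ B` iff `B - A` is positive semidefinite. -/
def Loewner {n : ℕ} (A B : Matrix (Fin n) (Fin n) ℝ) : Prop := (B - A).PosSemidef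

/-- Matrix logarithm of a Hermitian matrix (junk value `0` otherwise). -/
def mlog {n : ℕ} (M : Matrix (Fin n) (Fin n) ℝ) : Matrix (Fin n) (Fin n) ℝ :=
  if h : M.IsHermitian then h.cfc Real.log else 0

/-- Inverse square root `M^{-1/2}` of a Hermitian (positive definite) matrix. -/
def minvSqrt {n : ℕ} (M : Matrix (Fin n) (Fin n) ℝ) : Matrix (Fin n) (Fin n) ℝ :=
  if h : M.IsHermitian then h.cfc (fun x => (Real.sqrt x)⁻¹) else 0

/-- The invariant metric `δ∞(A,B) = ‖log (A^{-1/2} B A^{-1/2})‖` (spectral norm). -/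
def deltaInf {n : ℕ} (A B : Matrix (Fin n) (Fin n) ℝ) : ℝ :=
  ‖mlog (minvSqrt A * B * minvSqrt A)‖

/-- Largest eigenvalue of a Hermitian matrix. -/
def lmax {n : ℕ} (M : Matrix (Fin n) (Fin n) ℝ) : ℝ :=
  if h : M.IsHermitian then ⨆ i, h.eigenvalues i else 0

/-- Smallest eigenvalue of a Hermitian matrix. -/
def lmin {n : ℕ} (M : Matrix (Fin n) (Fin n) ℝ) : ℝ :=
  if h : M.IsHermitian then ⨅ i, h.eigenvalues i else 0

/-- The Riccati operator `F_{Q,R}(P)`. -/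
def Ricc {n m : ℕ} (A : Matrix (Fin n) (Fin n) ℝ) (B : Matrix (Fin n) (Fin m) ℝ)
    (Q : Matrix (Fin n) (Fin n) ℝ) (R : Matrix (Fin m) (Fin m) ℝ)
    (P : Matrix (Fin n) (Fin n) ℝ) : Matrix (Fin n) (Fin n) ℝ :=
  Q + Aᵀ * P * A - Aᵀ * P * B * (R + Bᵀ * P * B)⁻¹ * Bᵀ * P * A

/-!
With `S = A^{1/2}` and `M = A^{-1/2} B A^{-1/2}` one has `A - B = S (1 - M) S`, hence
`‖A - B‖ ≤ ‖S‖² ‖1 - M‖ = ‖A‖ ‖1 - M‖`, and `‖A‖ ≤ λ_max(U)` because `0 ⪯ A ⪯ U ⪯ λ_max(U) I`.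
The eigenvalues of `M` are `e^t` with `|t| ≤ δ∞(A,B) ≤ c`, and on `[-c, c]` convexity of `exp`
(monotonicity of its secant slopes at `0`) gives `|1 - e^t| ≤ (e^c - 1)/c · |t|`.
-/

namespace Real

lemma abs_one_sub_exp_le {c t : ℝ} (hc : 0 < c) (ht : |t| ≤ c) :
    |1 - exp t| ≤ (exp c - 1) / c * |t| := by
  rcases eq_or_ne t 0 with rfl | ht0
  · simp
  have hslope : (exp t - 1) / t ≤ (exp c - 1) / c := by
    simpa using convexOn_exp.secant_mono (a := 0) (Set.mem_univ _) (Set.mem_univ t)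
      (Set.mem_univ c) ht0 hc.ne' (le_of_abs_le ht)
  have hslope_nonneg : 0 ≤ (exp t - 1) / t := by
    rcases ht0.lt_or_gt with h | h
    · exact div_nonneg_of_nonpos (by linarith [exp_lt_one_iff.2 h]) h.le
    · exact div_nonneg (by linarith [one_lt_exp_iff.2 h]) h.le
  calc |1 - exp t| = (exp t - 1) / t * |t| := by
        rw [abs_sub_comm, ← abs_of_nonneg hslope_nonneg, ← abs_mul, div_mul_cancel₀ _ ht0]
    _ ≤ (exp c - 1) / c * |t| := mul_le_mul_of_nonneg_right hslope (abs_nonneg t)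

lemma continuousOn_inv_sqrt {s : Set ℝ} (hs : ∀ x ∈ s, 0 < x) :
    ContinuousOn (fun x => (√x)⁻¹) s :=
  continuous_sqrt.continuousOn.inv₀ fun x hx => sqrt_ne_zero'.2 (hs x hx)

end Real

section CFC

variable {𝒜 : Type*} [NormedRing 𝒜] [StarRing 𝒜] [NormedAlgebra ℝ 𝒜]
  [IsometricContinuousFunctionalCalculus ℝ 𝒜 IsSelfAdjoint]

open Real

lemma norm_one_sub_le_of_norm_cfc_log_le {a : 𝒜} {c : ℝ} (ha : IsSelfAdjoint a)
    (ha_pos : ∀ x ∈ spectrum ℝ a, 0 < x) (hc : 0 < c) (hlog : ‖cfc log a‖ ≤ c) :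
    ‖1 - a‖ ≤ (exp c - 1) / c * ‖cfc log a‖ := by
  have hlog_cont : ContinuousOn log (spectrum ℝ a) :=
    continuousOn_log.mono fun x hx => (ha_pos x hx).ne'
  have hK : 0 ≤ (exp c - 1) / c := div_nonneg (by linarith [add_one_le_exp c]) hc.le
  have h_one_sub : 1 - a = cfc (fun x : ℝ => 1 - x) a := by
    rw [cfc_sub .., cfc_const_one ℝ a, cfc_id' ℝ a]
  rw [h_one_sub]
  refine norm_cfc_le (mul_nonneg hK (norm_nonneg _)) fun x hx => ?_
  have hx_log : |log x| ≤ ‖cfc log a‖ := norm_apply_le_norm_cfc log a hx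
  calc ‖1 - x‖ = |1 - exp (log x)| := by rw [exp_log (ha_pos x hx), norm_eq_abs]
    _ ≤ (exp c - 1) / c * |log x| := abs_one_sub_exp_le hc (hx_log.trans hlog)
    _ ≤ (exp c - 1) / c * ‖cfc log a‖ := mul_le_mul_of_nonneg_left hx_log hK

variable [CStarRing 𝒜]

lemma norm_sub_le_norm_mul_norm_one_sub_conj {a : 𝒜} (ha : IsSelfAdjoint a)
    (ha_pos : ∀ x ∈ spectrum ℝ a, 0 < x) (b : 𝒜) :
    ‖a - b‖ ≤ ‖a‖ * ‖1 - cfc (fun x => (√x)⁻¹) a * b * cfc (fun x => (√x)⁻¹) a‖ := by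
  set s := cfc sqrt a
  set r := cfc (fun x => (√x)⁻¹) a
  have hr_cont := continuousOn_inv_sqrt ha_pos
  have hsr : s * r = 1 := by
    rw [← cfc_mul .., ← cfc_one ℝ a]
    exact cfc_congr fun x hx => mul_inv_cancel₀ (sqrt_ne_zero'.2 (ha_pos x hx))
  have hrs : r * s = 1 := by
    rw [← cfc_mul .., ← cfc_one ℝ a]
    exact cfc_congr fun x hx => inv_mul_cancel₀ (sqrt_ne_zero'.2 (ha_pos x hx))
  have hss : s * s = a := by
    conv_rhs => rw [← cfc_id' ℝ a]
    rw [← cfc_mul ..]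
    exact cfc_congr fun x hx => mul_self_sqrt (ha_pos x hx).le
  have hs_sa : IsSelfAdjoint s := cfc_predicate _ _
  have hab : a - b = s * (1 - r * b * r) * s := by
    rw [mul_sub, sub_mul, mul_one, hss]
    congr 1
    simp only [← mul_assoc, hsr, one_mul]
    rw [mul_assoc, hrs, mul_one]
  calc ‖a - b‖ = ‖s * (1 - r * b * r) * s‖ := by rw [hab]
    _ ≤ ‖s‖ * ‖1 - r * b * r‖ * ‖s‖ := norm_mul₃_le
    _ = ‖a‖ * ‖1 - r * b * r‖ := by
        rw [mul_right_comm, ← CStarRing.norm_star_mul_self, hs_sa.star_eq, hss]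

end CFC

section Matrix

open scoped MatrixOrder ComplexOrder

lemma Matrix.PosDef.spectrum_pos {m 𝕜 : Type*} [Fintype m] [DecidableEq m] [RCLike 𝕜]
    {A : Matrix m m 𝕜} (hA : A.PosDef) {x : ℝ} (hx : x ∈ spectrum ℝ A) : 0 < x :=
  hA.isStrictlyPositive.spectrum_pos hx

variable {n : ℕ}

lemma mlog_eq_cfc (M : Matrix (Fin n) (Fin n) ℝ) : mlog M = cfc Real.log M := by
  rw [mlog]
  split_ifs with hM
  · exact (hM.cfc_eq _).symm
  · exact (cfc_apply_of_not_predicate M (by rwa [← isHermitian_iff_isSelfAdjoint])).symm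

lemma minvSqrt_eq_cfc (M : Matrix (Fin n) (Fin n) ℝ) :
    minvSqrt M = cfc (fun x => (√x)⁻¹) M := by
  rw [minvSqrt]
  split_ifs with hM
  · exact (hM.cfc_eq _).symm
  · exact (cfc_apply_of_not_predicate M (by rwa [← isHermitian_iff_isSelfAdjoint])).symm

lemma Matrix.PosDef.minvSqrt_mul_mul_minvSqrt {A B : Matrix (Fin n) (Fin n) ℝ} (hA : A.PosDef)
    (hB : B.PosDef) : (minvSqrt A * B * minvSqrt A).PosDef := by
  have hA_pos : ∀ x ∈ spectrum ℝ A, 0 < x := fun _ => hA.spectrum_pos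
  have h_unit : IsUnit (minvSqrt A) := by
    rw [minvSqrt_eq_cfc, isUnit_cfc_iff _ A (Real.continuousOn_inv_sqrt hA_pos)
      hA.1.isSelfAdjoint]
    exact fun x hx => inv_ne_zero (Real.sqrt_ne_zero'.2 (hA_pos x hx))
  rw [← isStrictlyPositive_iff_posDef]
  exact .conjugate_of_isUnit_of_isSelfAdjoint B _ h_unit
    (minvSqrt_eq_cfc A ▸ cfc_predicate _ A) hB.isStrictlyPositive

lemma norm_le_lmax_of_loewner {A U : Matrix (Fin n) (Fin n) ℝ} (hA : A.PosSemidef)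
    (hAU : Loewner A U) : ‖A‖ ≤ lmax U := by
  have hU : U.PosSemidef := by simpa using hA.add hAU
  have h_spec_le : ∀ x ∈ spectrum ℝ U, x ≤ lmax U := by
    rw [hU.1.spectrum_real_eq_range_eigenvalues, lmax, dif_pos hU.1]
    rintro _ ⟨i, rfl⟩
    exact le_ciSup (Set.finite_range _).bddAbove i
  have hlmax_nonneg : 0 ≤ lmax U := by
    rw [lmax, dif_pos hU.1]
    exact Real.iSup_nonneg hU.eigenvalues_nonneg
  have hA_le : A ≤ algebraMap ℝ _ (lmax U) :=
    (le_iff.2 hAU).trans (le_algebraMap_of_spectrum_le h_spec_le)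
  rw [← cfc_id' ℝ A]
  refine norm_cfc_le hlmax_nonneg fun x hx => ?_
  rw [Real.norm_of_nonneg (spectrum_nonneg_of_nonneg (nonneg_iff_posSemidef.2 hA) hx)]
  exact (le_algebraMap_iff_spectrum_le hA.1.isSelfAdjoint).1 hA_le x hx

end Matrix

theorem stmt5_general {n : ℕ} (A B U : Matrix (Fin n) (Fin n) ℝ) (c : ℝ)
    (hA : A.PosDef) (hB : B.PosDef)
    (hAU : Loewner A U) (hc : 0 < c) (hd : deltaInf A B ≤ c) :
    ‖A - B‖ ≤ lmax U * ((Real.exp c - 1) / c) * deltaInf A B := by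
  set M := minvSqrt A * B * minvSqrt A
  have hM : M.PosDef := hA.minvSqrt_mul_mul_minvSqrt hB
  have hδ : deltaInf A B = ‖cfc Real.log M‖ := by rw [deltaInf, mlog_eq_cfc]
  have hA_le : ‖A‖ ≤ lmax U := norm_le_lmax_of_loewner hA.posSemidef hAU
  calc ‖A - B‖ ≤ ‖A‖ * ‖1 - M‖ := by
        simpa only [M, minvSqrt_eq_cfc] using norm_sub_le_norm_mul_norm_one_sub_conj
          hA.1.isSelfAdjoint (fun _ => hA.spectrum_pos) B
    _ ≤ lmax U * ((Real.exp c - 1) / c * deltaInf A B) := by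
        rw [hδ] at hd ⊢
        exact mul_le_mul hA_le (norm_one_sub_le_of_norm_cfc_log_le hM.1.isSelfAdjoint
          (fun _ => hM.spectrum_pos) hc hd) (norm_nonneg _)
          ((norm_nonneg _).trans hA_le)
    _ = lmax U * ((Real.exp c - 1) / c) * deltaInf A B := by ring

theorem stmt5 {n : ℕ} (A B U : Matrix (Fin n) (Fin n) ℝ) (c : ℝ)
    (hA : A.PosDef) (hB : B.PosDef) (hU : U.PosDef)
    (hAU : Loewner A U) (hc : 0 < c) (hd : deltaInf A B ≤ c) :
    ‖A - B‖ ≤ lmax U * ((Real.exp c - 1) / c) * deltaInf A B :=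
  stmt5_general A B U c hA hB hAU hc hd
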